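/- For the complete graph K_n with n ≥ 2, the number of κ-equivalence classes of acyclic orientations equals (n−1)!, i.e., κ(K_n) = (n−1)!. -/

import Mathlib

/-- An orientation of a simple graph: a choice of direction for each edge. -/
structure GraphOrientation {V : Type*} (G : SimpleGraph V) where
  dir : V → V → Prop
  consistent : ∀ u v, G.Adj u v ↔ (dir u v ∨ dir v u)
  asymm : ∀ u v, dir u v → ¬ dir v u

/-- An orientation is acyclic if its directed graph has no directed cycle. -/
def GraphOrientation.IsAcyclic {V : Type*} {G : SimpleGraph V} (O : GraphOrientation G) : Prop :=
  ∀ v, ¬ Relation.TransGen O.dir v v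

/-- The type of acyclic orientations of `G`. -/
def AcycGraphOrientation {V : Type*} (G : SimpleGraph V) := {O : GraphOrientation G // O.IsAcyclic}

/-- `Click O O'` holds when `O'` is obtained from `O` by a source-to-sink operation:
reversing all edges incident to some source vertex `v`. -/
def Click {V : Type*} {G : SimpleGraph V} (O O' : GraphOrientation G) : Prop :=
  ∃ v, (∀ u, ¬ O.dir u v) ∧
    ∀ u w, O'.dir u w ↔ (((u = v ∨ w = v) ∧ O.dir w u) ∨ (u ≠ v ∧ w ≠ v ∧ O.dir u w))

/-- κ(G): the number of equivalence classes of acyclic orientations of `G` under the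
equivalence generated by source-to-sink operations. -/
noncomputable def kappa {V : Type*} (G : SimpleGraph V) : ℕ :=
  Nat.card (Quot (fun A B : AcycGraphOrientation G => Click A.1 B.1))

/-!
An acyclic orientation of `K_n` is a linear order of the vertices, i.e. a permutation `σ` of
`Fin n` with `σ v` the position of `v`. The only source is the vertex in position `0`; turning it
into a sink moves it to the last position and every other vertex down by one, so a click acts as
`σ ↦ σ - 1` (mod `n`). Every class therefore contains exactly one `σ` with `σ 0 = 0`, and these
are the `(n - 1)!` permutations of the remaining vertices.
-/

open Equiv

theorem Equiv.Perm.card_fixing {α : Type*} [Fintype α] [DecidableEq α] (a : α) :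
    Fintype.card {σ : Perm α // σ a = a} = (Fintype.card α - 1).factorial := by
  have e : Perm {b // b ≠ a} ≃ {σ : Perm α // σ a = a} :=
    (Perm.subtypeEquivSubtypePerm _).trans (subtypeEquivRight fun σ => by simp)
  rw [← Fintype.card_congr e, Fintype.card_perm]
  simp

theorem Fin.sub_one_lt_sub_one_iff {m : ℕ} {a b : Fin (m + 1)} :
    a - 1 < b - 1 ↔ ((a = 0 ∨ b = 0) ∧ b < a) ∨ (a ≠ 0 ∧ b ≠ 0 ∧ a < b) := by
  simp only [Fin.lt_def, Fin.coe_sub_one, Fin.ext_iff, Fin.val_zero, ne_eq]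
  split_ifs <;> omega

namespace GraphOrientation

variable {V : Type*}

theorem ext {G : SimpleGraph V} {O O' : GraphOrientation G} (h : O.dir = O'.dir) : O = O' := by
  cases O; cases O'; cases h; rfl

theorem dir_irrefl {G : SimpleGraph V} (O : GraphOrientation G) (v : V) : ¬ O.dir v v :=
  fun h => O.asymm v v h h

def ofEmbedding {α : Type*} [LinearOrder α] (f : V ↪ α) :
    GraphOrientation (⊤ : SimpleGraph V) where
  dir u v := f u < f v
  consistent u v := by simp [lt_or_lt_iff_ne]
  asymm _ _ h := h.not_gt

theorem isAcyclic_ofEmbedding {α : Type*} [LinearOrder α] (f : V ↪ α) :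
    (ofEmbedding f).IsAcyclic := by
  intro v hv
  have : IsTrans V (ofEmbedding f).dir := ⟨fun _ _ _ => lt_trans⟩
  exact lt_irrefl _ (Relation.transGen_eq_self (r := (ofEmbedding f).dir) ▸ hv)

section Complete

variable {O : GraphOrientation (⊤ : SimpleGraph V)}

theorem dir_or_dir_of_ne {u v : V} (h : u ≠ v) : O.dir u v ∨ O.dir v u :=
  (O.consistent u v).1 h

theorem IsAcyclic.dir_trans (hO : O.IsAcyclic) {a b c : V} (hab : O.dir a b) (hbc : O.dir b c) :
    O.dir a c := by
  have hac : Relation.TransGen O.dir a c := (Relation.TransGen.single hab).tail hbc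
  rcases eq_or_ne a c with rfl | hne
  · exact absurd hac (hO a)
  · exact (dir_or_dir_of_ne hne).resolve_right fun hca => hO a (hac.tail hca)

/-- The number of in-neighbours of `v`: its position in the linear order given by an acyclic
orientation of a complete graph. -/
noncomputable def rank (O : GraphOrientation (⊤ : SimpleGraph V)) (v : V) : ℕ :=
  {u | O.dir u v}.ncard

variable [Finite V]

theorem rank_lt_card (O : GraphOrientation (⊤ : SimpleGraph V)) (v : V) :
    O.rank v < Nat.card V :=
  Set.ncard_lt_card fun h =>
    O.dir_irrefl v (h.symm ▸ Set.mem_univ v : v ∈ {u | O.dir u v})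

theorem IsAcyclic.rank_lt_rank (hO : O.IsAcyclic) {u v : V} (h : O.dir u v) :
    O.rank u < O.rank v :=
  Set.ncard_lt_ncard ⟨fun _ hw => hO.dir_trans hw h, fun hsub => O.dir_irrefl u (hsub h)⟩

theorem IsAcyclic.dir_iff_rank_lt (hO : O.IsAcyclic) {u v : V} :
    O.dir u v ↔ O.rank u < O.rank v := by
  refine ⟨hO.rank_lt_rank, fun hlt => ?_⟩
  rcases eq_or_ne u v with rfl | hne
  · exact absurd hlt (lt_irrefl _)
  · exact (dir_or_dir_of_ne hne).resolve_right fun h => (hO.rank_lt_rank h).not_gt hlt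

theorem IsAcyclic.rank_injective (hO : O.IsAcyclic) : Function.Injective O.rank := by
  intro u v h
  by_contra hne
  rcases dir_or_dir_of_ne hne with huv | hvu
  · exact (hO.rank_lt_rank huv).ne h
  · exact (hO.rank_lt_rank hvu).ne' h

end Complete

section Perm

variable {n : ℕ}

abbrev ofPerm (σ : Perm (Fin n)) : GraphOrientation (⊤ : SimpleGraph (Fin n)) :=
  ofEmbedding σ.toEmbedding

theorem rank_ofPerm (σ : Perm (Fin n)) (v : Fin n) : (ofPerm σ).rank v = σ v := by
  have : {u | σ u < σ v} = σ.symm '' Set.Iio (σ v) := by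
    ext u
    simp
  simp only [rank, ofEmbedding, coe_toEmbedding]
  rw [this, Set.ncard_image_of_injective _ σ.symm.injective, ← Finset.coe_Iio,
    Set.ncard_coe_finset, Fin.card_Iio]

theorem ofPerm_injective : Function.Injective (ofPerm (n := n)) := fun σ τ h =>
  Equiv.ext fun v => Fin.ext <| by rw [← rank_ofPerm, h, rank_ofPerm]

end Perm

end GraphOrientation

open GraphOrientation

noncomputable def permEquivAcycGraphOrientation {n : ℕ} :
    Perm (Fin n) ≃ AcycGraphOrientation (⊤ : SimpleGraph (Fin n)) where
  toFun σ := ⟨ofPerm σ, isAcyclic_ofEmbedding _⟩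
  invFun A := Equiv.ofBijective
    (fun v => ⟨A.1.rank v, (A.1.rank_lt_card v).trans_eq (Nat.card_fin n)⟩)
    (Finite.injective_iff_bijective.1 fun _ _ h => A.2.rank_injective (Fin.val_eq_of_eq h))
  left_inv σ := Equiv.ext fun v => Fin.ext (rank_ofPerm σ v)
  right_inv A := Subtype.ext <| GraphOrientation.ext <| funext₂ fun _ _ =>
    propext A.2.dir_iff_rank_lt.symm

section Succ

variable {m : ℕ}

theorem click_ofPerm_iff {σ τ : Perm (Fin (m + 1))} :
    Click (ofPerm σ) (ofPerm τ) ↔ τ = σ.trans (Equiv.subRight 1) := by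
  have reverse_at_zero : ∀ v, σ v = 0 → ∀ u w,
      (((u = v ∨ w = v) ∧ σ w < σ u) ∨ (u ≠ v ∧ w ≠ v ∧ σ u < σ w)) ↔ σ u - 1 < σ w - 1 := by
    intro v hv u w
    simp only [Fin.sub_one_lt_sub_one_iff, ← hv, σ.injective.ne_iff, σ.injective.eq_iff]
  constructor
  · rintro ⟨v, hsource, hclick⟩
    have hv : σ v = 0 := by
      by_contra h
      exact hsource (σ.symm 0) (show σ (σ.symm 0) < σ v by simpa [Fin.pos_iff_ne_zero] using h)
    exact ofPerm_injective <| GraphOrientation.ext <| funext₂ fun u w =>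
      propext <| (hclick u w).trans (reverse_at_zero v hv u w)
  · rintro rfl
    refine ⟨σ.symm 0, fun u => ?_, fun u w => (reverse_at_zero _ (σ.apply_symm_apply 0) u w).symm⟩
    show ¬ σ u < σ (σ.symm 0)
    simp

def ShiftRel (σ τ : Perm (Fin (m + 1))) : Prop := τ = σ.trans (Equiv.subRight 1)

open Fin.NatCast in
theorem quot_mk_trans_subRight (σ : Perm (Fin (m + 1))) (k : ℕ) :
    Quot.mk ShiftRel (σ.trans (Equiv.subRight (k : Fin (m + 1)))) = Quot.mk ShiftRel σ := by
  induction k with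
  | zero => congr; ext; simp
  | succ k ih =>
    rw [← ih]
    refine (Quot.sound ?_).symm
    ext u
    simp [sub_sub]

noncomputable def quotShiftRelEquiv :
    Quot (ShiftRel (m := m)) ≃ {σ : Perm (Fin (m + 1)) // σ 0 = 0} where
  toFun := Quot.lift (fun σ => ⟨σ.trans (Equiv.subRight (σ 0)), sub_self _⟩) fun σ τ h => by
    subst h; ext u; simp
  invFun σ := Quot.mk _ σ
  left_inv := Quot.ind fun σ => by simpa using quot_mk_trans_subRight σ (σ 0)
  right_inv σ := Subtype.ext <| Equiv.ext fun u => by simp [σ.2]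

theorem kappa_top_fin_succ (m : ℕ) : kappa (⊤ : SimpleGraph (Fin (m + 1))) = m.factorial := by
  have e : Quot (fun A B : AcycGraphOrientation (⊤ : SimpleGraph (Fin (m + 1))) => Click A.1 B.1)
      ≃ {σ : Perm (Fin (m + 1)) // σ 0 = 0} :=
    (Quot.congr permEquivAcycGraphOrientation fun _ _ => click_ofPerm_iff.symm).symm.trans
      quotShiftRelEquiv
  rw [kappa, Nat.card_congr e, Nat.card_eq_fintype_card, Perm.card_fixing, Fintype.card_fin,
    Nat.add_sub_cancel]

end Succ

theorem kappa_complete_graph (n : ℕ) (hn : 2 ≤ n) :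
    kappa (⊤ : SimpleGraph (Fin n)) = (n - 1).factorial := by
  obtain ⟨m, rfl⟩ : ∃ m, n = m + 1 := ⟨n - 1, by omega⟩
  exact kappa_top_fin_succ m
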